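/- For finitely supported real sequences b = {b_I} and β = {β_J}, with σ independent uniform ±1 random signs, the averaged operator norm of P^{0,1}_b P^{σ,1,0}_β satisfies the exact equality ‖P^{0,1}_b P^{σ,1,0}_β‖_{E,2→2}² = sup_{J∈𝒟} β_J² [ |J|^{−1} Σ_{I∈𝒟, I⊊J} b_I² |I| + b_J² + |J| Σ_{I∈𝒟, J⊊I} b_I² / |I| ]. -/

import Mathlib

open MeasureTheory ProbabilityTheory Real Filter
open scoped ENNReal

attribute [local instance] Classical.propDecidable

noncomputable section

namespace RandomParaproducts

/-- Dyadic intervals: `(n, k)` represents `[k·2ⁿ, (k+1)·2ⁿ)`. -/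
abbrev D : Type := ℤ × ℤ

/-- The length `2ⁿ` of the dyadic interval `(n, k)`. -/
def len (I : D) : ℝ := (2 : ℝ) ^ I.1

/-- The dyadic interval `[k·2ⁿ, (k+1)·2ⁿ)` as a subset of `ℝ`. -/
def ival (I : D) : Set ℝ := Set.Ico ((I.2 : ℝ) * (2 : ℝ) ^ I.1) (((I.2 : ℝ) + 1) * (2 : ℝ) ^ I.1)

/-- The left half of a dyadic interval. -/
def lc (I : D) : D := (I.1 - 1, 2 * I.2)

/-- The right half of a dyadic interval. -/
def rc (I : D) : D := (I.1 - 1, 2 * I.2 + 1)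

/-- The `L²`-normalized Haar function `h_I = h⁰_I`. -/
def haar (I : D) : ℝ → ℝ := fun x =>
  (Real.sqrt (len I))⁻¹ *
    ((ival (rc I)).indicator (fun _ => (1 : ℝ)) x - (ival (lc I)).indicator (fun _ => (1 : ℝ)) x)

/-- The function `h¹_I = |h_I| = |I|^{-1/2} 1_I`. -/
def haar1 (I : D) : ℝ → ℝ := fun x =>
  (Real.sqrt (len I))⁻¹ * (ival I).indicator (fun _ => (1 : ℝ)) x

/-- `h^ε_I`, where `false` codes the exponent `0` and `true` codes the exponent `1`. -/
def hfun : Bool → D → ℝ → ℝ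
  | false => haar
  | true => haar1

/-- The inner product `⟨f, g⟩ = ∫ f g` on `L²(ℝ)`. -/
def ip (f g : ℝ → ℝ) : ℝ := ∫ x, f x * g x

/-- The paraproduct `P^{ε,δ}_b f = ∑_I b_I ⟨f, h^δ_I⟩ h^ε_I` with finitely supported
numerical symbol `b`. -/
def P (e d : Bool) (b : D →₀ ℝ) (f : ℝ → ℝ) : ℝ → ℝ := fun x =>
  ∑ I ∈ b.support, b I * ip f (hfun d I) * hfun e I x

/-- The signed paraproduct `P^{σ,ε,δ}_b f = ∑_I σ_I b_I ⟨f, h^δ_I⟩ h^ε_I`. -/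
def Psig (σ : D → ℝ) (e d : Bool) (b : D →₀ ℝ) (f : ℝ → ℝ) : ℝ → ℝ := fun x =>
  ∑ I ∈ b.support, σ I * (b I * ip f (hfun d I) * hfun e I x)

/-- The square of the `L²(ℝ)` norm, `‖g‖₂² = ∫ g²`. -/
def l2normSq (g : ℝ → ℝ) : ℝ := ∫ x, (g x) ^ 2

/-- The Carleson norm of a sequence `a` whose nonzero entries lie in the finite set `s`:
`sup_J (|J|⁻¹ ∑_{I ⊆ J} a_I² |I|)^{1/2}`. -/
def carlOn (s : Finset D) (a : D → ℝ) : ℝ :=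
  ⨆ J : D, Real.sqrt ((len J)⁻¹ *
    ∑ I ∈ s.filter (fun I => ival I ⊆ ival J), (a I) ^ 2 * len I)

/-- `μ` is the law of independent uniformly distributed random signs `{σ_I : I ∈ 𝒟}`. -/
def IsSignMeasure (μ : Measure (D → ℝ)) : Prop :=
  IsProbabilityMeasure μ ∧
    iIndepFun (m := fun _ : D => (inferInstance : MeasurableSpace ℝ)) (fun I σ => σ I) μ ∧
    ∀ I : D, μ.map (fun σ => σ I) =
      (2⁻¹ : ℝ≥0∞) • (Measure.dirac (1 : ℝ) + Measure.dirac (-1 : ℝ))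

/-- `f` is a unit vector of `L²(ℝ)`. -/
def UnitL2 (f : ℝ → ℝ) : Prop := MemLp f 2 volume ∧ eLpNorm f 2 volume = 1

/-- The operator norm on `L²(ℝ)` of a map defined on functions. -/
def opNorm (T : (ℝ → ℝ) → ℝ → ℝ) : ℝ :=
  ⨆ f : {f : ℝ → ℝ // UnitL2 f}, Real.sqrt (l2normSq (T f.1))

/-- The averaged operator norm `sup_{‖f‖₂ = 1} (𝔼 ‖T_σ f‖₂²)^{1/2}`. -/
def avgOpNorm (μ : Measure (D → ℝ)) (T : (D → ℝ) → (ℝ → ℝ) → ℝ → ℝ) : ℝ :=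
  ⨆ f : {f : ℝ → ℝ // UnitL2 f}, Real.sqrt (∫ σ, l2normSq (T σ f.1) ∂μ)

/-- `b` is the finite linear combination of Haar functions with coefficients `c`. -/
def FinHaar (b : ℝ → ℝ) (c : D →₀ ℝ) : Prop :=
  b = fun x => ∑ I ∈ c.support, c I * haar I x

/-- The paraproduct `P^{ε,γ}_{b,α} f = ∑_{I} (⟨b, h^α_I⟩/|I|^{1/2}) ⟨f, h^γ_I⟩ h^ε_I` with
function symbol `b`, the sum extended over a finite set `s` containing all the
nonvanishing terms. -/
def Pb (s : Finset D) (e g a : Bool) (b : ℝ → ℝ) (f : ℝ → ℝ) : ℝ → ℝ := fun x =>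
  ∑ I ∈ s, (ip b (hfun a I) / Real.sqrt (len I)) * ip f (hfun g I) * hfun e I x

lemma measurableSet_ival (I : D) : MeasurableSet (ival I) := measurableSet_Ico

lemma volume_ival_ne_top (I : D) : volume (ival I) ≠ ⊤ := by
  simp only [ival, Real.volume_Ico]; exact ENNReal.ofReal_ne_top

lemma memℒp_haar (I : D) : MemLp (haar I) 2 volume := by
  have h1 : MemLp ((ival (rc I)).indicator (fun _ => (1 : ℝ))) 2 volume :=
    memLp_indicator_const 2 (measurableSet_ival _) 1 (Or.inr (volume_ival_ne_top _))
  have h2 : MemLp ((ival (lc I)).indicator (fun _ => (1 : ℝ))) 2 volume :=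
    memLp_indicator_const 2 (measurableSet_ival _) 1 (Or.inr (volume_ival_ne_top _))
  exact ((h1.sub h2).const_mul ((Real.sqrt (len I))⁻¹))

/-- The Haar function `h_I` as an element of `L²(ℝ)`. -/
def haarLp (I : D) : Lp ℝ 2 (volume : Measure ℝ) := (memℒp_haar I).toLp (haar I)

/-- The random Haar multiplier `T_σ f = ∑_{I ∈ 𝒟} σ_I ⟨f, h_I⟩ h_I`, as an element of
`L²(ℝ)`; the (infinite) sum converges unconditionally in `L²`. -/
def Tfull (σ : D → ℝ) (g : ℝ → ℝ) : Lp ℝ 2 (volume : Measure ℝ) :=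
  ∑' I : D, (σ I * ip g (haar I)) • haarLp I

/-- The composition `M_b T_σ M_β` applied to `f`, as a function. -/
def MbTM (σ : D → ℝ) (b β f : ℝ → ℝ) : ℝ → ℝ := fun x =>
  b x * (Tfull σ fun y => β y * f y) x

/-!
The inner paraproduct is `Σ_J σ_J β_J ⟨f, h_J⟩ h¹_J`, and the outer one expands it in the Haar
basis, with coefficients `b_I Σ_J σ_J β_J ⟨f, h_J⟩ ⟨h¹_J, h¹_I⟩`. Orthonormality of the `h_I` in
`L²(ℝ)` and of the signs `σ_J` in `L²(μ)` gives
`𝔼 ‖P^{0,1}_b P^{σ,1,0}_β f‖₂² = Σ_J ⟨f, h_J⟩² w_J` with `w_J = β_J² Σ_I b_I² ⟨h¹_J, h¹_I⟩²`.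
By Bessel's inequality this is at most `sup_J w_J` on the unit sphere, with equality at `f = h_J`.
Finally `⟨h¹_J, h¹_I⟩² = |I ∩ J|² / (|I| |J|)` is `|I|/|J|`, `1`, `|J|/|I|` or `0` according as
`I ⊊ J`, `I = J`, `J ⊊ I` or `I ∩ J = ∅`, since dyadic intervals are nested or disjoint.
-/

lemma len_pos (I : D) : 0 < len I := by unfold len; positivity

-- Through `⌊x / 2ⁿ⌋`, the nesting of dyadic intervals becomes integer division by powers of 2.
lemma mem_ival_iff {I : D} {x : ℝ} : x ∈ ival I ↔ ⌊x / 2 ^ I.1⌋ = I.2 := by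
  have h : (0 : ℝ) < 2 ^ I.1 := by positivity
  rw [Int.floor_eq_iff, ival, Set.mem_Ico, le_div_iff₀ h, div_lt_iff₀ h]

lemma floor_div_two_zpow_add (x : ℝ) (n : ℤ) (d : ℕ) :
    ⌊x / 2 ^ (n + d)⌋ = ⌊x / 2 ^ n⌋ / 2 ^ d := by
  have h := Int.floor_div_natCast (x / 2 ^ n) (2 ^ d)
  push_cast at h
  rw [zpow_add₀ two_ne_zero, zpow_natCast, ← div_div, h]

lemma ival_subset_of_mem_of_mem {I J : D} {x : ℝ} (hIJ : I.1 ≤ J.1) (hxI : x ∈ ival I)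
    (hxJ : x ∈ ival J) : ival I ⊆ ival J := by
  obtain ⟨d, hd⟩ := Int.le.dest hIJ
  intro y hy
  rw [mem_ival_iff] at hxI hxJ hy ⊢
  rw [← hd, floor_div_two_zpow_add, hy, ← hxI, ← floor_div_two_zpow_add, hd, hxJ]

lemma ival_nonempty (I : D) : (ival I).Nonempty :=
  ⟨I.2 * 2 ^ I.1,
    mem_ival_iff.2 (by rw [mul_div_cancel_right₀ _ (by positivity), Int.floor_intCast])⟩

lemma volume_ival (I : D) : volume (ival I) = ENNReal.ofReal (len I) := by
  rw [ival, Real.volume_Ico, len]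
  ring_nf

lemma measureReal_ival (I : D) : volume.real (ival I) = len I := by
  rw [measureReal_def, volume_ival, ENNReal.toReal_ofReal (len_pos I).le]

lemma ival_injective : Function.Injective ival := by
  intro I J h
  have hlen : len I = len J := by
    have := congrArg volume h
    rwa [volume_ival, volume_ival, ENNReal.ofReal_eq_ofReal_iff (len_pos I).le (len_pos J).le]
      at this
  have h1 : I.1 = J.1 := zpow_right_injective₀ two_pos (by norm_num : (2 : ℝ) ≠ 1) hlen
  obtain ⟨x, hx⟩ := ival_nonempty I
  have hxJ : x ∈ ival J := h ▸ hx
  rw [mem_ival_iff] at hx hxJ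
  exact Prod.ext h1 (by rw [← hx, ← hxJ, h1])

lemma lt_of_ival_ssubset {I J : D} (h : ival I ⊂ ival J) : I.1 < J.1 := by
  by_contra! hJI
  obtain ⟨x, hx⟩ := ival_nonempty I
  exact h.2 (ival_subset_of_mem_of_mem hJI (h.1 hx) hx)

lemma ival_eq_or_ssubset_or_disjoint (I J : D) :
    I = J ∨ ival I ⊂ ival J ∨ ival J ⊂ ival I ∨ Disjoint (ival I) (ival J) := by
  by_cases hd : Disjoint (ival I) (ival J)
  · exact Or.inr (Or.inr (Or.inr hd))
  obtain ⟨x, hxI, hxJ⟩ := Set.not_disjoint_iff.1 hd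
  rcases eq_or_ne I J with hIJ | hIJ
  · exact Or.inl hIJ
  have hne : ival I ≠ ival J := ival_injective.ne hIJ
  rcases le_total I.1 J.1 with h | h
  · exact Or.inr (Or.inl ((ival_subset_of_mem_of_mem h hxI hxJ).ssubset_of_ne hne))
  · exact Or.inr (Or.inr (Or.inl ((ival_subset_of_mem_of_mem h hxJ hxI).ssubset_of_ne hne.symm)))

lemma ne_of_disjoint_ival {I J : D} (h : Disjoint (ival I) (ival J)) : I ≠ J := by
  rintro rfl
  exact (ival_nonempty I).ne_empty (disjoint_self.1 h)

lemma mem_ival_lc_or_rc_iff {I : D} {x : ℝ} :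
    x ∈ ival (lc I) ∨ x ∈ ival (rc I) ↔ x ∈ ival I := by
  have h := floor_div_two_zpow_add x (I.1 - 1) 1
  rw [Nat.cast_one, sub_add_cancel, pow_one] at h
  simp only [mem_ival_iff, lc, rc, h]
  omega

lemma disjoint_ival_lc_rc (I : D) : Disjoint (ival (lc I)) (ival (rc I)) :=
  Set.disjoint_left.2 fun x hl hr => by
    rw [mem_ival_iff] at hl hr
    simp only [lc, rc] at hl hr
    omega

lemma ival_lc_subset (I : D) : ival (lc I) ⊆ ival I :=
  fun _ hx => mem_ival_lc_or_rc_iff.1 (Or.inl hx)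

lemma ival_rc_subset (I : D) : ival (rc I) ⊆ ival I :=
  fun _ hx => mem_ival_lc_or_rc_iff.1 (Or.inr hx)

lemma ival_subset_lc_or_rc {I J : D} (h : ival I ⊂ ival J) :
    ival I ⊆ ival (lc J) ∨ ival I ⊆ ival (rc J) := by
  have hle : I.1 ≤ J.1 - 1 := by have := lt_of_ival_ssubset h; omega
  obtain ⟨x, hx⟩ := ival_nonempty I
  rcases mem_ival_lc_or_rc_iff.2 (h.1 hx) with hl | hr
  · exact Or.inl (ival_subset_of_mem_of_mem hle hx hl)
  · exact Or.inr (ival_subset_of_mem_of_mem hle hx hr)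

lemma len_lc (I : D) : len (lc I) = len I / 2 := by
  rw [len, len, lc, zpow_sub_one₀ two_ne_zero, div_eq_mul_inv]

lemma len_rc (I : D) : len (rc I) = len I / 2 := by
  rw [len, len, rc, zpow_sub_one₀ two_ne_zero, div_eq_mul_inv]

lemma ip_comm (f g : ℝ → ℝ) : ip f g = ip g f := by
  simp only [ip, mul_comm]

lemma ip_const_mul_left (c : ℝ) (f g : ℝ → ℝ) : ip (fun x => c * f x) g = c * ip f g := by
  simp only [ip, mul_assoc, integral_const_mul]

lemma ip_finset_sum_left {ι : Type*} (s : Finset ι) {f : ι → ℝ → ℝ} {g : ℝ → ℝ}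
    (hf : ∀ i ∈ s, Integrable fun x => f i x * g x) :
    ip (fun x => ∑ i ∈ s, f i x) g = ∑ i ∈ s, ip (f i) g := by
  simp only [ip, Finset.sum_mul]
  exact integral_finsetSum s hf

lemma l2normSq_eq_ip (f : ℝ → ℝ) : l2normSq f = ip f f := by
  simp only [l2normSq, ip, sq]

lemma ip_eq_inner {f g : ℝ → ℝ} (hf : MemLp f 2 volume) (hg : MemLp g 2 volume) :
    ip f g = inner ℝ (hf.toLp f) (hg.toLp g) := by
  rw [L2.inner_def, ip]
  refine integral_congr_ae ?_
  filter_upwards [hf.coeFn_toLp, hg.coeFn_toLp] with x hfx hgx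
  rw [hfx, hgx, real_inner_eq_re_inner, RCLike.inner_apply, conj_trivial, mul_comm]
  rfl

lemma integrable_indicator_ival (I : D) : Integrable ((ival I).indicator fun _ => (1 : ℝ)) :=
  (integrable_indicator_iff (measurableSet_ival I)).2
    (integrableOn_const (volume_ival_ne_top I))

lemma memLp_haar1 (I : D) : MemLp (haar1 I) 2 volume :=
  (memLp_indicator_const 2 (measurableSet_ival I) 1 (Or.inr (volume_ival_ne_top I))).const_mul _

lemma ip_haar1_haar1 (I J : D) :
    ip (haar1 I) (haar1 J) = volume.real (ival I ∩ ival J) / (√(len I) * √(len J)) := by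
  have h : ∀ x, haar1 I x * haar1 J x
      = (√(len I) * √(len J))⁻¹ * (ival I ∩ ival J).indicator 1 x := fun x => by
    simp only [haar1, Set.inter_indicator_one, mul_inv, Pi.mul_apply]
    exact mul_mul_mul_comm _ _ _ _
  simp only [ip, h, integral_const_mul, integral_indicator_one
    ((measurableSet_ival I).inter (measurableSet_ival J))]
  ring

lemma haar_eq_zero_of_notMem {I : D} {x : ℝ} (hx : x ∉ ival I) : haar I x = 0 := by
  rw [haar, Set.indicator_of_notMem fun h => hx (ival_rc_subset I h),
    Set.indicator_of_notMem fun h => hx (ival_lc_subset I h), sub_zero, mul_zero]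

lemma integral_haar (I : D) : ∫ x, haar I x = 0 := by
  have hind : ∀ K : D, ∫ x, (ival K).indicator (fun _ => (1 : ℝ)) x = len K := fun K => by
    rw [integral_indicator_const _ (measurableSet_ival K), smul_eq_mul, mul_one, measureReal_ival]
  unfold haar
  rw [integral_const_mul, integral_sub (integrable_indicator_ival _)
    (integrable_indicator_ival _), hind, hind, len_lc, len_rc, sub_self, mul_zero]

lemma haar_mul_self (I : D) (x : ℝ) : haar I x * haar I x = haar1 I x * haar1 I x := by
  simp only [haar, haar1]
  by_cases hr : x ∈ ival (rc I)
  · have hl : x ∉ ival (lc I) := Set.disjoint_right.1 (disjoint_ival_lc_rc I) hr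
    simp [hr, hl, ival_rc_subset I hr]
  by_cases hl : x ∈ ival (lc I)
  · simp [hr, hl, ival_lc_subset I hl]
  · have hI : x ∉ ival I := fun h => (mem_ival_lc_or_rc_iff.2 h).elim hl hr
    simp [hr, hl, hI]

lemma exists_haar_mul_eq_of_ssubset {I J : D} (h : ival I ⊂ ival J) :
    ∃ c : ℝ, ∀ x, haar I x * haar J x = c * haar I x := by
  suffices ∃ c : ℝ, ∀ x ∈ ival I, haar J x = c by
    obtain ⟨c, hc⟩ := this
    refine ⟨c, fun x => ?_⟩
    by_cases hx : x ∈ ival I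
    · rw [hc x hx, mul_comm]
    · rw [haar_eq_zero_of_notMem hx, zero_mul, mul_zero]
  rcases ival_subset_lc_or_rc h with hl | hr
  · refine ⟨-(√(len J))⁻¹, fun x hx => ?_⟩
    have hxr : x ∉ ival (rc J) := Set.disjoint_left.1 (disjoint_ival_lc_rc J) (hl hx)
    simp [haar, hl hx, hxr]
  · refine ⟨(√(len J))⁻¹, fun x hx => ?_⟩
    have hxl : x ∉ ival (lc J) := Set.disjoint_right.1 (disjoint_ival_lc_rc J) (hr hx)
    simp [haar, hr hx, hxl]

lemma ip_haar_of_ssubset {I J : D} (h : ival I ⊂ ival J) : ip (haar I) (haar J) = 0 := by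
  obtain ⟨c, hc⟩ := exists_haar_mul_eq_of_ssubset h
  simp only [ip, hc, integral_const_mul, integral_haar, mul_zero]

lemma ip_haar_haar (I J : D) : ip (haar I) (haar J) = if I = J then 1 else 0 := by
  rcases ival_eq_or_ssubset_or_disjoint I J with rfl | h | h | h
  · rw [if_pos rfl, ip, funext (haar_mul_self I), ← ip, ip_haar1_haar1, Set.inter_self,
      measureReal_ival, Real.mul_self_sqrt (len_pos I).le, div_self (len_pos I).ne']
  · rw [if_neg (ival_injective.ne_iff.1 h.ne), ip_haar_of_ssubset h]
  · rw [if_neg (ival_injective.ne_iff.1 h.ne'), ip_comm, ip_haar_of_ssubset h]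
  · rw [if_neg (ne_of_disjoint_ival h), ip]
    refine integral_eq_zero_of_ae (Eventually.of_forall fun x => ?_)
    by_cases hx : x ∈ ival I
    · simp [haar_eq_zero_of_notMem (Set.disjoint_left.1 h hx)]
    · simp [haar_eq_zero_of_notMem hx]

lemma sq_ip_haar1_of_subset {I J : D} (h : ival I ⊆ ival J) :
    ip (haar1 J) (haar1 I) ^ 2 = len I / len J := by
  have hI := len_pos I
  have hJ := len_pos J
  rw [ip_haar1_haar1, Set.inter_eq_right.2 h, measureReal_ival, div_pow, mul_pow,
    Real.sq_sqrt hI.le, Real.sq_sqrt hJ.le]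
  field_simp

lemma sq_ip_haar1_eq (I J : D) :
    ip (haar1 J) (haar1 I) ^ 2 =
      (if ival I ⊂ ival J then len I / len J else 0) + (if I = J then 1 else 0)
        + (if ival J ⊂ ival I then len J / len I else 0) := by
  rcases ival_eq_or_ssubset_or_disjoint I J with rfl | h | h | h
  · simp [sq_ip_haar1_of_subset subset_rfl, div_self (len_pos I).ne']
  · simp [sq_ip_haar1_of_subset h.1, h, ival_injective.ne_iff.1 h.ne, h.asymm]
  · simp [ip_comm (haar1 J), sq_ip_haar1_of_subset h.1, h, (ival_injective.ne_iff.1 h.ne).symm,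
      h.asymm]
  · have hIJ : ¬ ival I ⊂ ival J := fun h' => (ival_nonempty I).ne_empty (h.eq_bot_of_le h'.1)
    have hJI : ¬ ival J ⊂ ival I := fun h' =>
      (ival_nonempty J).ne_empty (h.symm.eq_bot_of_le h'.1)
    simp [ip_haar1_haar1, Set.disjoint_iff_inter_eq_empty.1 h.symm, hIJ, hJI,
      ne_of_disjoint_ival h]

lemma sum_sq_mul_sq_ip_haar1 (b : D →₀ ℝ) (J : D) :
    ∑ I ∈ b.support, b I ^ 2 * ip (haar1 J) (haar1 I) ^ 2 =
      (len J)⁻¹ * (∑ I ∈ b.support.filter (fun I => ival I ⊂ ival J), (b I) ^ 2 * len I)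
        + (b J) ^ 2
        + len J * ∑ I ∈ b.support.filter (fun I => ival J ⊂ ival I), (b I) ^ 2 / len I := by
  have hJ : ∑ I ∈ b.support, (if I = J then b I ^ 2 else 0) = b J ^ 2 := by
    rw [Finset.sum_ite_eq']
    split_ifs with h
    · rfl
    · rw [Finsupp.notMem_support_iff.1 h, sq, zero_mul]
  simp only [sq_ip_haar1_eq, mul_add, mul_ite, mul_zero, mul_one, Finset.sum_add_distrib, hJ,
    ← Finset.sum_filter, Finset.mul_sum]
  congr 2
  · exact Finset.sum_congr rfl fun I _ => by ring
  · funext I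
    ring

lemma orthonormal_haarLp : Orthonormal ℝ haarLp := by
  rw [orthonormal_iff_ite]
  intro I J
  rw [haarLp, haarLp, ← ip_eq_inner, ip_haar_haar]

lemma unitL2_haar (I : D) : UnitL2 (haar I) := by
  refine ⟨memℒp_haar I, ?_⟩
  have h := orthonormal_haarLp.1 I
  rwa [haarLp, Lp.norm_toLp, ENNReal.toReal_eq_one_iff] at h

lemma sum_sq_ip_haar_le_one {f : ℝ → ℝ} (hf : UnitL2 f) (s : Finset D) :
    ∑ J ∈ s, ip f (haar J) ^ 2 ≤ 1 := by
  obtain ⟨hmem, hnorm⟩ := hf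
  have h := orthonormal_haarLp.sum_inner_products_le (x := hmem.toLp f) (s := s)
  rw [Lp.norm_toLp, hnorm, ENNReal.toReal_one, one_pow] at h
  convert h using 2 with J
  rw [Real.norm_eq_abs, sq_abs, ip_eq_inner hmem (memℒp_haar J), real_inner_comm, haarLp]

lemma l2normSq_sum_haar (s : Finset D) (u : D → ℝ) :
    l2normSq (fun x => ∑ I ∈ s, u I * haar I x) = ∑ I ∈ s, u I ^ 2 := by
  have hmem : ∀ I, MemLp (fun x => u I * haar I x) 2 volume :=
    fun I => (memℒp_haar I).const_mul _
  have hsum : MemLp (fun x => ∑ I ∈ s, u I * haar I x) 2 volume :=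
    memLp_finsetSum s fun I _ => hmem I
  have hip : ∀ I, ip (haar I) (fun x => ∑ J ∈ s, u J * haar J x) = if I ∈ s then u I else 0 := by
    intro I
    rw [ip_comm, ip_finset_sum_left s fun J _ => (hmem J).integrable_mul (memℒp_haar I)]
    simp only [ip_const_mul_left, ip_haar_haar, mul_ite, mul_one, mul_zero,
      Finset.sum_ite_eq']
  rw [l2normSq_eq_ip, ip_finset_sum_left s fun I _ => (hmem I).integrable_mul hsum]
  refine Finset.sum_congr rfl fun I hI => ?_
  rw [ip_const_mul_left, hip, if_pos hI, sq]

lemma sum_sq_ip_haar_haar_mul {s : Finset D} {w : D → ℝ} (hws : ∀ J ∉ s, w J = 0) (J : D) :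
    ∑ K ∈ s, ip (haar J) (haar K) ^ 2 * w K = w J := by
  simp only [ip_haar_haar, ite_pow, one_pow, ne_eq, OfNat.ofNat_ne_zero, not_false_eq_true,
    zero_pow, ite_mul, one_mul, zero_mul, Finset.sum_ite_eq]
  split_ifs with hJ
  · rfl
  · exact (hws J hJ).symm

theorem sq_iSup_sqrt_sum_sq_ip_haar_mul {s : Finset D} {w : D → ℝ} (hw : ∀ J, 0 ≤ w J)
    (hws : ∀ J ∉ s, w J = 0) :
    (⨆ f : {f : ℝ → ℝ // UnitL2 f}, √(∑ J ∈ s, ip f.1 (haar J) ^ 2 * w J)) ^ 2 = ⨆ J, w J := by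
  have hbdd : BddAbove (Set.range w) := by
    refine ⟨∑ J ∈ s, w J, Set.forall_mem_range.2 fun J => ?_⟩
    by_cases hJ : J ∈ s
    · exact Finset.single_le_sum (fun K _ => hw K) hJ
    · exact (hws J hJ).symm ▸ Finset.sum_nonneg fun K _ => hw K
  set M := ⨆ J, w J
  have hwM : ∀ J, w J ≤ M := le_ciSup hbdd
  have hM : 0 ≤ M := (hw 0).trans (hwM 0)
  have hQ : ∀ f : {f : ℝ → ℝ // UnitL2 f}, ∑ J ∈ s, ip f.1 (haar J) ^ 2 * w J ≤ M := fun f =>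
    calc ∑ J ∈ s, ip f.1 (haar J) ^ 2 * w J ≤ ∑ J ∈ s, ip f.1 (haar J) ^ 2 * M :=
          Finset.sum_le_sum fun J _ => mul_le_mul_of_nonneg_left (hwM J) (sq_nonneg _)
      _ = (∑ J ∈ s, ip f.1 (haar J) ^ 2) * M := (Finset.sum_mul _ _ _).symm
      _ ≤ M := mul_le_of_le_one_left hM (sum_sq_ip_haar_le_one f.2 s)
  have : Nonempty {f : ℝ → ℝ // UnitL2 f} := ⟨⟨haar 0, unitL2_haar 0⟩⟩
  have hbddQ : BddAbove (Set.range fun f : {f : ℝ → ℝ // UnitL2 f} =>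
      √(∑ J ∈ s, ip f.1 (haar J) ^ 2 * w J)) :=
    ⟨√M, Set.forall_mem_range.2 fun f => Real.sqrt_le_sqrt (hQ f)⟩
  have hwS : ∀ J,
      √(w J) ≤ ⨆ f : {f : ℝ → ℝ // UnitL2 f}, √(∑ K ∈ s, ip f.1 (haar K) ^ 2 * w K) :=
    fun J => sum_sq_ip_haar_haar_mul hws J ▸ le_ciSup hbddQ ⟨haar J, unitL2_haar J⟩
  have hS : 0 ≤ ⨆ f : {f : ℝ → ℝ // UnitL2 f}, √(∑ J ∈ s, ip f.1 (haar J) ^ 2 * w J) :=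
    (Real.sqrt_nonneg _).trans (hwS 0)
  refine le_antisymm ?_ (ciSup_le fun J => (Real.sqrt_le_left hS).1 (hwS J))
  exact (Real.le_sqrt hS hM).1 (ciSup_le fun f => Real.sqrt_le_sqrt (hQ f))

lemma sq_sum_mul_eq_sum_sum (s : Finset D) (a : D → ℝ) (σ : D → ℝ) :
    (∑ J ∈ s, σ J * a J) ^ 2 = ∑ J ∈ s, ∑ K ∈ s, σ J * σ K * (a J * a K) := by
  rw [sq, Finset.sum_mul_sum]
  exact Finset.sum_congr rfl fun J _ => Finset.sum_congr rfl fun K _ => by ring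

namespace IsSignMeasure

variable {μ : Measure (D → ℝ)}

lemma ae_eq_one_or_neg_one (hμ : IsSignMeasure μ) (J : D) : ∀ᵐ σ ∂μ, σ J = 1 ∨ σ J = -1 := by
  have hs : MeasurableSet ({1, -1} : Set ℝ)ᶜ :=
    ((measurableSet_singleton _).union (measurableSet_singleton _)).compl
  have h : μ.map (fun σ => σ J) ({1, -1} : Set ℝ)ᶜ = 0 := by
    simp [hμ.2.2 J]
  rw [Measure.map_apply (measurable_pi_apply J) hs] at h
  exact measure_eq_zero_iff_ae_notMem.1 h |>.mono fun _ hσ => not_not.1 hσ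

lemma integrable_mul (hμ : IsSignMeasure μ) (J K : D) : Integrable (fun σ => σ J * σ K) μ := by
  have := hμ.1
  refine .of_bound ((measurable_pi_apply J).mul (measurable_pi_apply K)).aestronglyMeasurable 1 ?_
  filter_upwards [hμ.ae_eq_one_or_neg_one J, hμ.ae_eq_one_or_neg_one K] with σ hJ hK
  rcases hJ with hJ | hJ <;> rcases hK with hK | hK <;> simp [hJ, hK]

lemma integral_eq_zero (hμ : IsSignMeasure μ) (J : D) : ∫ σ, σ J ∂μ = 0 := by
  have h : ∫ σ, σ J ∂μ = ∫ x, x ∂(μ.map fun σ => σ J) :=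
    (integral_map (φ := fun σ : D → ℝ => σ J) (f := fun x : ℝ => x)
      (measurable_pi_apply J).aemeasurable measurable_id.aestronglyMeasurable).symm
  rw [h, hμ.2.2 J, integral_smul_measure, integral_add_measure (integrable_dirac (by simp))
      (integrable_dirac (by simp)), integral_dirac, integral_dirac]
  norm_num

lemma integral_mul (hμ : IsSignMeasure μ) (J K : D) :
    ∫ σ, σ J * σ K ∂μ = if J = K then 1 else 0 := by
  split_ifs with h
  · subst h
    have := hμ.1
    have h1 : ∀ᵐ σ ∂μ, σ J * σ J = 1 := (hμ.ae_eq_one_or_neg_one J).mono fun σ hσ => by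
      rcases hσ with hσ | hσ <;> simp [hσ]
    simpa using integral_congr_ae (g := fun _ => (1 : ℝ)) h1
  · refine ((hμ.2.1.indepFun h).integral_mul_eq_mul_integral
      (measurable_pi_apply J).aestronglyMeasurable
      (measurable_pi_apply K).aestronglyMeasurable).trans ?_
    rw [hμ.integral_eq_zero J, zero_mul]

lemma integrable_sq_sum (hμ : IsSignMeasure μ) (s : Finset D) (a : D → ℝ) :
    Integrable (fun σ => (∑ J ∈ s, σ J * a J) ^ 2) μ := by
  simp only [sq_sum_mul_eq_sum_sum]
  exact integrable_finsetSum _ fun J _ => integrable_finsetSum _ fun K _ =>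
    (hμ.integrable_mul J K).mul_const _

lemma integral_sq_sum (hμ : IsSignMeasure μ) (s : Finset D) (a : D → ℝ) :
    ∫ σ, (∑ J ∈ s, σ J * a J) ^ 2 ∂μ = ∑ J ∈ s, a J ^ 2 := by
  simp only [sq_sum_mul_eq_sum_sum]
  rw [integral_finsetSum _ fun J _ => integrable_finsetSum _ fun K _ =>
    (hμ.integrable_mul J K).mul_const _]
  refine Finset.sum_congr rfl fun J hJ => ?_
  rw [integral_finsetSum _ fun K _ => (hμ.integrable_mul J K).mul_const _]
  simp only [integral_mul_const, hμ.integral_mul, ite_mul, one_mul, zero_mul,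
    Finset.sum_ite_eq, if_pos hJ, sq]

end IsSignMeasure

lemma ip_Psig_haar1 (σ : D → ℝ) (β : D →₀ ℝ) (f : ℝ → ℝ) (I : D) :
    ip (Psig σ true false β f) (haar1 I) =
      ∑ J ∈ β.support, σ J * (β J * ip f (haar J) * ip (haar1 J) (haar1 I)) := by
  refine (ip_finset_sum_left _ fun J _ =>
    (((memLp_haar1 J).const_mul _).const_mul _).integrable_mul (memLp_haar1 I)).trans ?_
  simp only [hfun, ip_const_mul_left]

lemma l2normSq_P_Psig (σ : D → ℝ) (b β : D →₀ ℝ) (f : ℝ → ℝ) :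
    l2normSq (P false true b (Psig σ true false β f)) =
      ∑ I ∈ b.support, b I ^ 2 *
        (∑ J ∈ β.support, σ J * (β J * ip f (haar J) * ip (haar1 J) (haar1 I))) ^ 2 := by
  unfold P
  simp only [hfun]
  rw [l2normSq_sum_haar]
  simp only [ip_Psig_haar1, mul_pow]

theorem integral_l2normSq_P_Psig {μ : Measure (D → ℝ)} (hμ : IsSignMeasure μ) (b β : D →₀ ℝ)
    (f : ℝ → ℝ) :
    ∫ σ, l2normSq (P false true b (Psig σ true false β f)) ∂μ =
      ∑ J ∈ β.support, ip f (haar J) ^ 2 *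
        (β J ^ 2 * ∑ I ∈ b.support, b I ^ 2 * ip (haar1 J) (haar1 I) ^ 2) := by
  simp only [l2normSq_P_Psig]
  rw [integral_finsetSum _ fun I _ => (hμ.integrable_sq_sum _ _).const_mul _]
  simp only [integral_const_mul, hμ.integral_sq_sum, Finset.mul_sum]
  rw [Finset.sum_comm]
  exact Finset.sum_congr rfl fun J _ => Finset.sum_congr rfl fun I _ => by ring

/-- Exact formula for the square of the averaged operator norm of
`P^{0,1}_b P^{σ,1,0}_β`. -/
theorem statement14 (b β : D →₀ ℝ) (μ : Measure (D → ℝ)) (hμ : IsSignMeasure μ) :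
    (avgOpNorm μ (fun σ f => P false true b (Psig σ true false β f))) ^ 2 =
      ⨆ J : D, (β J) ^ 2 *
        ((len J)⁻¹ * (∑ I ∈ b.support.filter (fun I => ival I ⊂ ival J), (b I) ^ 2 * len I)
          + (b J) ^ 2
          + len J * ∑ I ∈ b.support.filter (fun I => ival J ⊂ ival I), (b I) ^ 2 / len I) := by
  unfold avgOpNorm
  simp only [integral_l2normSq_P_Psig hμ, ← sum_sq_mul_sq_ip_haar1]
  refine sq_iSup_sqrt_sum_sq_ip_haar_mul (fun J => by positivity) fun J hJ => ?_
  rw [Finsupp.notMem_support_iff.1 hJ, sq, zero_mul, zero_mul]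

end RandomParaproducts
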